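/- Let n ≥ 2 and let d be a natural number. The number of dominant elements s of S̃_n satisfying s(i) + n > s(i+1) for all 1 ≤ i ≤ n-1 and inv(s) = d equals the number of functions γ : {1, …, n-1} → ℕ with γ(i) ≤ i-1 for all i and Σ_{i=1}^{n-1} (n-i)·γ(i) = d. (Consequently, the Hilbert series of the triangulated unit hypercube in type Ã_{n-1} is ∏_{i=1}^{n-1} (1 + t^{n-i} + t^{2(n-i)} + ⋯ + t^{(i-1)(n-i)}).) -/

import Mathlib

/-- `s` is an element of the affine symmetric group `S̃_n`: a bijection of `ℤ` commuting
with translation by `n` and with normalized sum over a fundamental window. -/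
def IsAffPerm (n : ℕ) (s : ℤ → ℤ) : Prop :=
  Function.Bijective s ∧ (∀ i : ℤ, s (i + n) = s i + n) ∧
    ∑ i ∈ Finset.Icc (1 : ℤ) (n : ℤ), s i = ∑ i ∈ Finset.Icc (1 : ℤ) (n : ℤ), i

/-- `s` is dominant: `s(1) < s(2) < ⋯ < s(n)`. -/
def IsDominant (n : ℕ) (s : ℤ → ℤ) : Prop :=
  ∀ i : ℤ, 1 ≤ i → i < (n : ℤ) → s i < s (i + 1)

/-- The inversion number of `s` (equal to the Coxeter length). -/
noncomputable def invNum (n : ℕ) (s : ℤ → ℤ) : ℕ :=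
  Set.ncard {p : ℤ × ℤ | 1 ≤ p.1 ∧ p.1 ≤ (n : ℤ) ∧ p.1 < p.2 ∧ s p.2 < s p.1}

/-- `γ_i(s)` : the number of integers `t` with `s(i) < t < s(i+1)` such that
`t ≢ s(k) (mod n)` for all `i+1 ≤ k ≤ n`. -/
noncomputable def gam (n : ℕ) (s : ℤ → ℤ) (i : ℤ) : ℕ :=
  Set.ncard {t : ℤ | s i < t ∧ t < s (i + 1) ∧
    ∀ k : ℤ, i + 1 ≤ k → k ≤ (n : ℤ) → ¬ t ≡ s k [ZMOD (n : ℤ)]}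

/-!
For a dominant `s` in the unit hypercube, `s(i)` lies in `(s(i+1) - n, s(i+1))` and is
incongruent mod `n` to `s(i+1), …, s(n)`. Exactly `i` integers of that interval have this
property, and `γ_i(s)` counts those lying above `s(i)`. So, going down from `s(n)`, the window of
`s` is determined by `γ(s)` up to a translation, which the sum condition removes; each `γ_i` ranges
over `0, …, i - 1`; and every such vector occurs. An inversion `(a, b)` of `s` has `b > n`, and
`(a, b) ↦ (a, s(b))` identifies the inversions with the pairs `(a, t)` where `t` is counted by
`γ_i(s)` for some `i < a`, whence `inv(s) = ∑ (n - i) γ_i(s)`.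
-/

open Finset

lemma Fin.exists_natCast_add_one_eq {m : ℕ} {i : ℤ} (h₁ : 1 ≤ i) (h₂ : i ≤ m) :
    ∃ k : Fin m, ((k : ℕ) : ℤ) + 1 = i :=
  ⟨⟨(i - 1).toNat, by omega⟩, by dsimp only; omega⟩

section Residues

variable {n : ℕ}

lemma Int.eq_of_intCast_zmod_eq {a b : ℤ} (h : (a : ZMod n) = b) (h₁ : a < b + n)
    (h₂ : b < a + n) : a = b := by
  rw [ZMod.intCast_eq_intCast_iff_dvd_sub] at h
  have := Int.eq_zero_of_abs_lt_dvd h (by rw [abs_lt]; omega)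
  omega

lemma Int.exists_mem_Icc_eq_add_mul [NeZero n] (j : ℤ) :
    ∃ k ∈ Set.Icc (1 : ℤ) n, ∃ m : ℤ, j = k + m * n := by
  have hn : (0 : ℤ) < n := by have := NeZero.pos n; omega
  refine ⟨(j - 1) % n + 1, ⟨?_, ?_⟩, (j - 1) / n, ?_⟩
  · have := Int.emod_nonneg (j - 1) hn.ne'; omega
  · have := Int.emod_lt_of_pos (j - 1) hn; omega
  · have := Int.emod_add_mul_ediv (j - 1) n; linarith

lemma injOn_intCast_Ico (x : ℤ) : Set.InjOn (fun t : ℤ => (t : ZMod n)) ↑(Ico (x - n) x) :=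
  fun a ha b hb h => Int.eq_of_intCast_zmod_eq h (by grind) (by grind)

lemma image_intCast_Ico_eq_univ [NeZero n] (x : ℤ) :
    (Ico (x - n) x).image (fun t : ℤ => (t : ZMod n)) = univ := by
  refine eq_univ_of_card _ ?_
  rw [card_image_of_injOn (injOn_intCast_Ico x), Int.card_Ico, ZMod.card]
  omega

lemma card_filter_Ico_sub_notMem [NeZero n] (x : ℤ) (R : Finset (ZMod n)) :
    #{t ∈ Ico (x - n) x | ((t : ℤ) : ZMod n) ∉ R} = n - #R := by
  calc #{t ∈ Ico (x - n) x | ((t : ℤ) : ZMod n) ∉ R}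
      = #{z ∈ (Ico (x - n) x).image (fun t : ℤ => (t : ZMod n)) | z ∉ R} := by
        rw [filter_image,
          card_image_of_injOn ((injOn_intCast_Ico x).mono (coe_subset.2 (filter_subset _ _)))]
    _ = n - #R := by
        rw [image_intCast_Ico_eq_univ, filter_notMem_eq_sdiff, card_univ_sdiff, ZMod.card]

lemma card_filter_Ioo_lt_of_lt {p : ℤ → Prop} [DecidablePred p] {a b x : ℤ} (hab : a < b)
    (hbx : b < x) (hb : p b) : #{t ∈ Ioo b x | p t} < #{t ∈ Ioo a x | p t} := by
  refine card_lt_card ((ssubset_iff_of_subset ?_).2 ⟨b, ?_, ?_⟩)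
  · intro t
    simp only [mem_filter, mem_Ioo, and_imp]
    exact fun h₁ h₂ ht => ⟨⟨hab.trans h₁, h₂⟩, ht⟩
  · simp [hab, hbx, hb]
  · simp

lemma eq_of_card_filter_Ioo_eq {p : ℤ → Prop} [DecidablePred p] {a b x : ℤ} (ha : a < x)
    (hb : b < x) (hpa : p a) (hpb : p b) (h : #{t ∈ Ioo a x | p t} = #{t ∈ Ioo b x | p t}) :
    a = b := by
  rcases lt_trichotomy a b with hab | rfl | hab
  · exact absurd h (card_filter_Ioo_lt_of_lt hab hb hpb).ne'
  · rfl
  · exact absurd h (card_filter_Ioo_lt_of_lt hab ha hpa).ne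

lemma exists_card_filter_Ioo_eq [NeZero n] {R : Finset (ZMod n)} {x : ℤ} (hx : (x : ZMod n) ∈ R)
    {g : ℕ} (hg : g < n - #R) :
    ∃ t, x - n < t ∧ t < x ∧ (t : ZMod n) ∉ R ∧ #{u ∈ Ioo t x | ((u : ℤ) : ZMod n) ∉ R} = g := by
  set A := {t ∈ Ico (x - n) x | ((t : ℤ) : ZMod n) ∉ R}
  have hsurj : Set.SurjOn (fun t => #{u ∈ Ioo t x | ((u : ℤ) : ZMod n) ∉ R}) A (range #A) := by
    refine surjOn_of_injOn_of_card_le _ (fun t ht => ?_) (fun a ha b hb h => ?_) (by simp)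
    · simp only [coe_filter, Set.mem_ofPred_eq, mem_Ico, coe_range, Set.mem_Iio, A] at ht ⊢
      refine card_lt_card ((ssubset_iff_of_subset fun u => ?_).2 ⟨t, ?_, by simp⟩)
      · simp only [mem_filter, mem_Ioo, mem_Ico]
        exact fun ⟨⟨h₁, h₂⟩, hu⟩ => ⟨⟨by omega, h₂⟩, hu⟩
      · simp [ht]
    · simp only [coe_filter, Set.mem_ofPred_eq, mem_Ico, A] at ha hb
      exact eq_of_card_filter_Ioo_eq ha.1.2 hb.1.2 ha.2 hb.2 h
  obtain ⟨t, ht, rfl⟩ := hsurj (by simpa [A, card_filter_Ico_sub_notMem] using hg)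
  simp only [coe_filter, Set.mem_ofPred_eq, mem_Ico, A] at ht
  refine ⟨t, lt_of_le_of_ne ht.1.1 fun h => ht.2 ?_, ht.1.2, ht.2, rfl⟩
  simpa [← h] using hx

end Residues

section Gam

variable {n : ℕ}

noncomputable def upperResidues (n : ℕ) (s : ℤ → ℤ) (i : ℤ) : Finset (ZMod n) :=
  (Ioc i n).image fun k => (s k : ZMod n)

noncomputable def gamVec (n : ℕ) (s : ℤ → ℤ) (k : Fin (n - 1)) : ℕ :=
  gam n s ((k : ℕ) + 1)

noncomputable def gamSet (n : ℕ) (s : ℤ → ℤ) (i : ℤ) : Finset ℤ :=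
  {t ∈ Ioo (s i) (s (i + 1)) | ((t : ℤ) : ZMod n) ∉ upperResidues n s i}

lemma mem_gamSet {s : ℤ → ℤ} {i t : ℤ} :
    t ∈ gamSet n s i ↔ s i < t ∧ t < s (i + 1) ∧ ∀ k, i < k → k ≤ n → (s k : ZMod n) ≠ t := by
  rw [gamSet, mem_filter]
  simp [upperResidues, and_assoc]

lemma gam_eq_card (s : ℤ → ℤ) (i : ℤ) : gam n s i = #(gamSet n s i) := by
  rw [gam, ← Set.ncard_coe_finset]
  congr 1
  ext t
  simp only [gamSet, upperResidues, coe_filter, mem_Ioo, mem_image, mem_Ioc, not_exists, not_and,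
    ZMod.intCast_eq_intCast_iff, Int.add_one_le_iff, and_assoc, Set.mem_ofPred_eq]
  simp only [Int.modEq_comm]

lemma upperResidues_congr {f g : ℤ → ℤ} {i : ℤ} (h : Set.EqOn f g (Set.Ioc i n)) :
    upperResidues n f i = upperResidues n g i :=
  image_congr fun k hk => by simp [h (by simpa using hk)]

lemma gamSet_congr {f g : ℤ → ℤ} {i : ℤ} (h : Set.EqOn f g (Set.Icc i n)) (hi : i < n) :
    gamSet n f i = gamSet n g i := by
  rw [gamSet, gamSet, h (by simp [hi.le]), h (by simp; omega),
    upperResidues_congr (h.mono Set.Ioc_subset_Icc_self)]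

lemma gam_congr {f g : ℤ → ℤ} {i : ℤ} (h : Set.EqOn f g (Set.Icc i n)) (hi : i < n) :
    gam n f i = gam n g i := by
  rw [gam_eq_card, gam_eq_card, gamSet_congr h hi]

lemma intCast_mem_upperResidues (f : ℤ → ℤ) {i : ℤ} (hi : i < n) :
    (f (i + 1) : ZMod n) ∈ upperResidues n f i :=
  mem_image_of_mem _ (by simp; omega)

lemma gamSet_add_const (s : ℤ → ℤ) (c i : ℤ) :
    gamSet n (fun k => s k + c) i = (gamSet n s i).map (addRightEmbedding c) := by
  ext t
  simp only [mem_map, mem_gamSet, addRightEmbedding_apply, Int.cast_add]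
  constructor
  · rintro ⟨h₁, h₂, h⟩
    refine ⟨t - c, ⟨by omega, by omega, fun k hk hkn he => h k hk hkn ?_⟩, by ring⟩
    rw [he, Int.cast_sub, sub_add_cancel]
  · rintro ⟨a, ⟨h₁, h₂, h⟩, rfl⟩
    exact ⟨by omega, by omega, fun k hk hkn he =>
      h k hk hkn (add_right_cancel (he.trans (Int.cast_add a c)))⟩

lemma gam_add_const (s : ℤ → ℤ) (c i : ℤ) : gam n (fun k => s k + c) i = gam n s i := by
  rw [gam_eq_card, gam_eq_card, gamSet_add_const, card_map]

end Gam

section Window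

variable {n : ℕ} {f g : ℤ → ℤ} {a : ℤ}

/-- The conditions met by the values `s(a), …, s(n)` of a dominant element `s` of `S̃_n` in the
unit hypercube. -/
def IsCubeWindow (n : ℕ) (f : ℤ → ℤ) (a : ℤ) : Prop :=
  (∀ i : ℤ, a ≤ i → i < n → f i < f (i + 1) ∧ f (i + 1) < f i + n) ∧
    Set.InjOn (fun i => (f i : ZMod n)) (Set.Icc a n)

namespace IsCubeWindow

lemma congr (hf : IsCubeWindow n f a) (h : Set.EqOn f g (Set.Icc a n)) : IsCubeWindow n g a := by
  refine ⟨fun i hi hin => ?_, hf.2.congr fun i hi => by simp only [h hi]⟩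
  rw [← h ⟨hi, hin.le⟩, ← h ⟨by omega, by omega⟩]
  exact hf.1 i hi hin

lemma add_const (hf : IsCubeWindow n f a) (c : ℤ) : IsCubeWindow n (fun i => f i + c) a := by
  refine ⟨fun i hi hin => ?_, fun i hi j hj h => hf.2 hi hj (by simpa using h)⟩
  have := hf.1 i hi hin
  dsimp only
  omega

lemma strictMonoOn (hf : IsCubeWindow n f a) : StrictMonoOn f (Set.Icc a n) :=
  strictMonoOn_of_lt_add_one Set.ordConnected_Icc fun i _ hi hi' => (hf.1 i hi.1 (by
    simp only [Set.mem_Icc] at hi'; omega)).1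

lemma apply_lt_apply (hf : IsCubeWindow n f a) {i j : ℤ} (hi : a ≤ i) (hij : i < j)
    (hj : j ≤ n) : f i < f j :=
  hf.strictMonoOn ⟨hi, hij.le.trans hj⟩ ⟨hi.trans hij.le, hj⟩ hij

lemma apply_le_apply (hf : IsCubeWindow n f a) {i j : ℤ} (hi : a ≤ i) (hij : i ≤ j)
    (hj : j ≤ n) : f i ≤ f j :=
  hf.strictMonoOn.monotoneOn ⟨hi, hij.trans hj⟩ ⟨hi.trans hij, hj⟩ hij

lemma notMem_upperResidues (hf : IsCubeWindow n f a) {i : ℤ} (hi : a ≤ i) :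
    (f i : ZMod n) ∉ upperResidues n f i := by
  simp only [upperResidues, mem_image, mem_Ioc, not_exists, not_and]
  intro k hk h
  have := hf.2 ⟨by omega, hk.2⟩ ⟨hi, by omega⟩ h
  omega

lemma card_upperResidues (hf : IsCubeWindow n f a) {i : ℤ} (hi : a ≤ i + 1) :
    #(upperResidues n f i) = (n - i).toNat := by
  rw [upperResidues, card_image_of_injOn, Int.card_Ioc]
  exact hf.2.mono fun k hk => by simp only [coe_Ioc, Set.mem_Ioc] at hk; exact ⟨by omega, hk.2⟩

lemma gam_lt [NeZero n] (hf : IsCubeWindow n f a) {i : ℤ} (hi : a ≤ i) (hin : i < n) :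
    (gam n f i : ℤ) < i := by
  set R := upperResidues n f i
  set A := {t ∈ Ico (f (i + 1) - n) (f (i + 1)) | ((t : ℤ) : ZMod n) ∉ R}
  have hstep := hf.1 i hi hin
  have hfi : f i ∈ A := by simp [A, R, hstep, hf.notMem_upperResidues hi]; omega
  have hsub : gamSet n f i ⊆ A.erase (f i) := by
    intro t ht
    simp only [gamSet, mem_filter, mem_Ioo] at ht
    simp only [A, mem_erase, mem_filter, mem_Ico]
    exact ⟨by omega, ⟨by omega, ht.1.2⟩, ht.2⟩
  have hA : #A = n - (n - i).toNat := by
    rw [card_filter_Ico_sub_notMem, hf.card_upperResidues (by omega)]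
  have hle : #(gamSet n f i) ≤ #A - 1 := (card_le_card hsub).trans_eq (card_erase_of_mem hfi)
  have hpos : 0 < #A := card_pos.2 ⟨f i, hfi⟩
  rw [gam_eq_card]
  omega

lemma eq_of_gam_eq (hf : IsCubeWindow n f a) (hg : IsCubeWindow n g a) {i : ℤ} (hi : a ≤ i)
    (hin : i < n) (h : Set.EqOn f g (Set.Ioc i n)) (hgam : gam n f i = gam n g i) : f i = g i := by
  have hx : f (i + 1) = g (i + 1) := h ⟨by omega, by omega⟩
  rw [gam_eq_card, gam_eq_card, gamSet, gamSet, ← hx, ← upperResidues_congr h] at hgam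
  exact eq_of_card_filter_Ioo_eq (hf.1 i hi hin).1 (hx ▸ (hg.1 i hi hin).1)
    (hf.notMem_upperResidues hi) (upperResidues_congr h ▸ hg.notMem_upperResidues hi) hgam

lemma eqOn_of_gam_eq (hf : IsCubeWindow n f 1) (hg : IsCubeWindow n g 1) (hn : f n = g n)
    (h : ∀ i : ℤ, 1 ≤ i → i < n → gam n f i = gam n g i) : Set.EqOn f g (Set.Icc 1 n) := by
  suffices ∀ i ≤ (n : ℤ), 1 ≤ i → Set.EqOn f g (Set.Icc i n) from
    fun k hk => this 1 (hk.1.trans hk.2) le_rfl hk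
  intro i hi
  induction i, hi using Int.leInductionDown with
  | base => exact fun _ k hk => by rw [le_antisymm hk.2 hk.1, hn]
  | pred i hin ih =>
    intro hi
    have ih := ih (by omega)
    have hprev : f (i - 1) = g (i - 1) := hf.eq_of_gam_eq hg hi (by omega)
      (ih.mono (Set.Ioc_sub_one_left_eq_Icc i (n : ℤ)).subset) (h _ hi (by omega))
    intro k hk
    rcases eq_or_lt_of_le hk.1 with rfl | hk'
    · exact hprev
    · exact ih ⟨by omega, hk.2⟩

lemma update (hf : IsCubeWindow n f a) (ha : a ≤ n) {t : ℤ} (ht : t < f a) (ht' : f a < t + n)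
    (htR : (t : ZMod n) ∉ upperResidues n f (a - 1)) :
    IsCubeWindow n (Function.update f (a - 1) t) (a - 1) := by
  have heq : Set.EqOn (Function.update f (a - 1) t) f (Set.Icc a n) :=
    fun k hk => Function.update_of_ne (by have := hk.1; omega) _ _
  refine ⟨fun i hi hin => ?_, ?_⟩
  · rcases eq_or_lt_of_le hi with rfl | hi
    · rw [Function.update_self, sub_add_cancel, heq ⟨le_rfl, by omega⟩]
      exact ⟨ht, ht'⟩
    · rw [heq ⟨by omega, hin.le⟩, heq ⟨by omega, by omega⟩]
      exact hf.1 i (by omega) hin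
  · rw [← Set.insert_Icc_add_one_left_eq_Icc (by omega), sub_add_cancel,
      Set.injOn_insert (by simp)]
    refine ⟨hf.2.congr fun k hk => by simp only [heq hk], ?_⟩
    rintro ⟨k, hk, hkt⟩
    simp only [heq hk, Function.update_self] at hkt
    exact htR (mem_image.2 ⟨k, by simp only [mem_Ioc]; exact ⟨by have := hk.1; omega, hk.2⟩, hkt⟩)

end IsCubeWindow

lemma exists_isCubeWindow_gam_eq [NeZero n] (γ : ℤ → ℕ) (hγ : ∀ i : ℤ, 1 ≤ i → i < n → γ i < i) :
    ∃ f, IsCubeWindow n f 1 ∧ ∀ i : ℤ, 1 ≤ i → i < n → gam n f i = γ i := by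
  suffices ∀ a ≤ (n : ℤ), 1 ≤ a →
      ∃ f, IsCubeWindow n f a ∧ ∀ i : ℤ, a ≤ i → i < n → gam n f i = γ i from
    this 1 (by have := NeZero.pos n; omega) le_rfl
  intro a ha
  induction a, ha using Int.leInductionDown with
  | base =>
    refine fun _ => ⟨fun _ => 0, ⟨fun i hi hin => absurd hin (by omega), ?_⟩,
      fun i hi hin => absurd hin (by omega)⟩
    rw [Set.Icc_self]
    exact Set.injOn_singleton _ _
  | pred a han ih =>
    intro ha
    obtain ⟨f, hf, hfγ⟩ := ih (by omega)
    have hx : (f a : ZMod n) ∈ upperResidues n f (a - 1) := by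
      simpa using intCast_mem_upperResidues f (i := a - 1) (by omega)
    obtain ⟨t, ht, ht', htR, htγ⟩ := exists_card_filter_Ioo_eq hx (g := γ (a - 1)) (by
      have := hγ (a - 1) ha (by omega)
      rw [hf.card_upperResidues (by omega)]
      omega)
    have heq : Set.EqOn (Function.update f (a - 1) t) f (Set.Ioc (a - 1) n) :=
      fun k hk => Function.update_of_ne (by have := hk.1; omega) _ _
    refine ⟨_, hf.update han (by omega) (by omega) htR, fun i hi hin => ?_⟩
    rcases eq_or_lt_of_le hi with rfl | hi
    · rw [gam_eq_card, gamSet, Function.update_self, upperResidues_congr heq, sub_add_cancel,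
        heq ⟨by omega, han⟩]
      exact htγ
    · rw [gam_congr (heq.mono (Set.Icc_subset_Ioc (by omega) le_rfl)) hin]
      exact hfγ i (by omega) hin

end Window

section AffPerm

variable {n : ℕ} {s : ℤ → ℤ}

lemma apply_add_mul_of_apply_add (h : ∀ i, s (i + n) = s i + n) (i m : ℤ) :
    s (i + m * n) = s i + m * n := by
  induction m using Int.induction_on with
  | zero => simp
  | succ m ih => rw [add_one_mul, ← add_assoc, h, ih, add_assoc]
  | pred m ih =>
    have := h (i + (-m - 1) * n)
    rw [show i + (-(m : ℤ) - 1) * n + n = i + -m * n by ring, ih] at this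
    linarith

lemma image_intCast_Icc_eq_univ [NeZero n] {f : ℤ → ℤ}
    (hf : Set.InjOn (fun i => (f i : ZMod n)) (Set.Icc 1 n)) :
    (Icc 1 (n : ℤ)).image (fun i => (f i : ZMod n)) = univ :=
  eq_univ_of_card _ (by rw [card_image_of_injOn (by simpa), Int.card_Icc, ZMod.card]; omega)

lemma bijective_of_apply_add_of_injOn [NeZero n] (h : ∀ i, s (i + n) = s i + n)
    (hs : Set.InjOn (fun i => (s i : ZMod n)) (Set.Icc 1 n)) : Function.Bijective s := by
  have hn : (n : ℤ) ≠ 0 := by have := NeZero.pos n; omega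
  refine ⟨fun a b hab => ?_, fun y => ?_⟩
  · obtain ⟨k, hk, m, rfl⟩ := Int.exists_mem_Icc_eq_add_mul (n := n) a
    obtain ⟨l, hl, m', rfl⟩ := Int.exists_mem_Icc_eq_add_mul (n := n) b
    rw [apply_add_mul_of_apply_add h, apply_add_mul_of_apply_add h] at hab
    obtain rfl : k = l := hs hk hl (by simpa using congrArg (fun x : ℤ => (x : ZMod n)) hab)
    obtain rfl : m = m' := mul_right_cancel₀ hn (by linarith)
    rfl
  · obtain ⟨k, hk, hky⟩ := mem_image.1 ((image_intCast_Icc_eq_univ hs).symm ▸ mem_univ (y : ZMod n))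
    obtain ⟨m, hm⟩ := (ZMod.intCast_eq_intCast_iff_dvd_sub _ _ _).1 hky
    refine ⟨k + m * n, ?_⟩
    rw [apply_add_mul_of_apply_add h]
    linarith

lemma sum_intCast_eq_sum_univ [NeZero n] {f : ℤ → ℤ}
    (hf : Set.InjOn (fun i => (f i : ZMod n)) (Set.Icc 1 n)) :
    ∑ i ∈ Icc 1 (n : ℤ), (f i : ZMod n) = ∑ z : ZMod n, z := by
  rw [← image_intCast_Icc_eq_univ hf, sum_image (by simpa using hf)]

lemma exists_sum_add_const_eq [NeZero n] {f : ℤ → ℤ}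
    (hf : Set.InjOn (fun i => (f i : ZMod n)) (Set.Icc 1 n)) :
    ∃ c : ℤ, ∑ i ∈ Icc 1 (n : ℤ), (f i + c) = ∑ i ∈ Icc 1 (n : ℤ), i := by
  have hid : Set.InjOn (fun i : ℤ => (i : ZMod n)) (Set.Icc 1 n) :=
    fun a ha b hb h => Int.eq_of_intCast_zmod_eq h (by grind) (by grind)
  obtain ⟨c, hc⟩ : (n : ℤ) ∣ ∑ i ∈ Icc 1 (n : ℤ), i - ∑ i ∈ Icc 1 (n : ℤ), f i := by
    rw [← ZMod.intCast_zmod_eq_zero_iff_dvd]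
    push_cast
    rw [sum_intCast_eq_sum_univ hid, sum_intCast_eq_sum_univ hf, sub_self]
  refine ⟨c, ?_⟩
  rw [sum_add_distrib, sum_const, Int.card_Icc, add_sub_cancel_right, Int.toNat_natCast,
    nsmul_eq_mul]
  linarith

/-- The extension of `f|[1, n]` to a map commuting with translation by `n`. -/
def periodicExtension (n : ℕ) (f : ℤ → ℤ) (j : ℤ) : ℤ :=
  f ((j - 1) % n + 1) + (j - 1) / n * n

lemma periodicExtension_of_mem {f : ℤ → ℤ} {j : ℤ} (hj : j ∈ Set.Icc 1 (n : ℤ)) :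
    periodicExtension n f j = f j := by
  rw [periodicExtension, Int.emod_eq_of_lt (by grind) (by grind),
    Int.ediv_eq_zero_of_lt (by grind) (by grind)]
  simp

lemma periodicExtension_add [NeZero n] (f : ℤ → ℤ) (j : ℤ) :
    periodicExtension n f (j + n) = periodicExtension n f j + n := by
  have hn : (n : ℤ) ≠ 0 := by have := NeZero.pos n; omega
  rw [periodicExtension, periodicExtension, show j + n - 1 = j - 1 + 1 * n by ring,
    Int.add_mul_emod_self_right, Int.add_mul_ediv_right _ _ hn]
  ring

lemma exists_isAffPerm_eqOn_add_const [NeZero n] {f : ℤ → ℤ}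
    (hf : Set.InjOn (fun i => (f i : ZMod n)) (Set.Icc 1 n)) :
    ∃ s c, IsAffPerm n s ∧ ∀ i ∈ Set.Icc 1 (n : ℤ), s i = f i + c := by
  obtain ⟨c, hc⟩ := exists_sum_add_const_eq hf
  have heq : ∀ i ∈ Set.Icc 1 (n : ℤ), periodicExtension n (fun i => f i + c) i = f i + c :=
    fun i hi => periodicExtension_of_mem hi
  have hinj : Set.InjOn (fun i => (periodicExtension n (fun i => f i + c) i : ZMod n))
      (Set.Icc 1 n) := fun i hi j hj h => hf hi hj (by simpa [heq i hi, heq j hj] using h)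
  refine ⟨_, c, ⟨bijective_of_apply_add_of_injOn (periodicExtension_add _) hinj,
    periodicExtension_add _, ?_⟩, heq⟩
  rw [← hc]
  exact sum_congr rfl fun i hi => heq i (by simpa using hi)

namespace IsAffPerm

lemma apply_add_mul (hs : IsAffPerm n s) (i m : ℤ) : s (i + m * n) = s i + m * n :=
  apply_add_mul_of_apply_add hs.2.1 i m

lemma injOn_intCast (hs : IsAffPerm n s) : Set.InjOn (fun i => (s i : ZMod n)) (Set.Icc 1 n) := by
  intro i hi j hj h
  obtain ⟨m, hm⟩ := (ZMod.intCast_eq_intCast_iff_dvd_sub _ _ _).1 h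
  have hji : j = i + m * n := hs.1.1 (by rw [hs.apply_add_mul]; linarith)
  have := Int.eq_zero_of_abs_lt_dvd (⟨m, by rw [hji]; ring⟩ : (n : ℤ) ∣ j - i)
    (by rw [abs_lt]; grind)
  omega

lemma exists_eq_apply_add_mul [NeZero n] (hs : IsAffPerm n s) (t : ℤ) :
    ∃ k ∈ Set.Icc 1 (n : ℤ), ∃ m : ℤ, t = s k + m * n := by
  obtain ⟨j, rfl⟩ := hs.1.2 t
  obtain ⟨k, hk, m, rfl⟩ := Int.exists_mem_Icc_eq_add_mul (n := n) j
  exact ⟨k, hk, m, hs.apply_add_mul k m⟩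

lemma eq_of_eqOn_add_const [NeZero n] {s' : ℤ → ℤ} {c : ℤ} (hs : IsAffPerm n s)
    (hs' : IsAffPerm n s') (h : ∀ i ∈ Set.Icc 1 (n : ℤ), s i = s' i + c) : s = s' := by
  have hsum := hs.2.2
  rw [sum_congr rfl fun i hi => h i (by simpa using hi), sum_add_distrib, hs'.2.2, sum_const,
    Int.card_Icc, add_sub_cancel_right, Int.toNat_natCast, nsmul_eq_mul] at hsum
  have hc : c = 0 :=
    (mul_eq_zero.1 (by linarith : (n : ℤ) * c = 0)).resolve_left (by exact_mod_cast NeZero.ne n)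
  funext j
  obtain ⟨k, hk, m, rfl⟩ := Int.exists_mem_Icc_eq_add_mul (n := n) j
  rw [hs.apply_add_mul, hs'.apply_add_mul, h k hk, hc, add_zero]

lemma isCubeWindow (hs : IsAffPerm n s) (hdom : IsDominant n s)
    (hcube : ∀ i : ℤ, 1 ≤ i → i < n → s (i + 1) < s i + n) : IsCubeWindow n s 1 :=
  ⟨fun i hi hin => ⟨hdom i hi hin, hcube i hi hin⟩, hs.injOn_intCast⟩

end IsAffPerm

lemma IsCubeWindow.exists_isAffPerm [NeZero n] {f : ℤ → ℤ} (hf : IsCubeWindow n f 1) :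
    ∃ s, IsAffPerm n s ∧ IsCubeWindow n s 1 ∧ ∀ i : ℤ, 1 ≤ i → i < n → gam n s i = gam n f i := by
  obtain ⟨s, c, hs, hsf⟩ := exists_isAffPerm_eqOn_add_const hf.2
  refine ⟨s, hs, (hf.add_const c).congr fun i hi => (hsf i hi).symm, fun i hi hin => ?_⟩
  rw [gam_congr (fun j hj => hsf j ⟨by have := hj.1; omega, hj.2⟩) hin, gam_add_const]

end AffPerm

section Inversions

variable {n : ℕ} {s : ℤ → ℤ}

lemma Int.exists_lt_le_of_lt_le {α : Type*} [LinearOrder α] (f : ℤ → α) {a b : ℤ} {x : α}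
    (hab : a ≤ b) (ha : f a < x) (hb : x ≤ f b) :
    ∃ i, a ≤ i ∧ i < b ∧ f i < x ∧ x ≤ f (i + 1) := by
  induction b, hab using Int.leInduction with
  | base => exact absurd (ha.trans_le hb) (lt_irrefl _)
  | succ b hab ih =>
    rcases le_or_gt x (f b) with h | h
    · obtain ⟨i, hai, hib, hi⟩ := ih h
      exact ⟨i, hai, by omega, hi⟩
    · exact ⟨b, hab, by omega, h, hb⟩

lemma IsCubeWindow.disjoint_gamSet {f : ℤ → ℤ} {a : ℤ} (hf : IsCubeWindow n f a) {i j : ℤ}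
    (hi : a ≤ i) (hij : i < j) (hj : j < n) : Disjoint (gamSet n f i) (gamSet n f j) := by
  rw [disjoint_left]
  intro t hti htj
  rw [mem_gamSet] at hti htj
  have := hf.apply_le_apply (i := i + 1) (j := j) (by omega) (by omega) hj.le
  omega

namespace IsAffPerm

variable [NeZero n]

lemma exists_mem_gamSet_of_lt (hs : IsAffPerm n s) (hw : IsCubeWindow n s 1) {a b : ℤ}
    (ha : a ∈ Set.Icc 1 (n : ℤ)) (hab : a < b) (hba : s b < s a) :
    ∃ i, 1 ≤ i ∧ i < a ∧ s b ∈ gamSet n s i := by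
  have hn := NeZero.pos n
  obtain ⟨k, hk, m, rfl⟩ := Int.exists_mem_Icc_eq_add_mul (n := n) b
  rw [hs.apply_add_mul] at hba ⊢
  have hm : 1 ≤ m := by
    by_contra! hm
    rcases (by omega : m = 0 ∨ m ≤ -1) with rfl | hm
    · simp only [zero_mul, add_zero] at hab hba
      exact (hw.apply_lt_apply ha.1 hab hk.2).not_gt hba
    · have : m * n ≤ -1 * n := mul_le_mul_of_nonneg_right hm (by positivity)
      linarith [hk.2, ha.1]
  have hsk : s k + n ≤ s k + m * n := by nlinarith
  have h1k : s 1 ≤ s k := hw.apply_le_apply le_rfl hk.1 hk.2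
  obtain ⟨i, hi, hia, hit, hti⟩ :=
    Int.exists_lt_le_of_lt_le s ha.1 (by omega : s 1 < s k + m * n) hba.le
  have hne : s k + m * n ≠ s (i + 1) := by
    rw [← hs.apply_add_mul]
    intro h
    have := hs.1.1 h
    nlinarith [ha.2]
  refine ⟨i, hi, hia, ?_⟩
  refine mem_gamSet.2 ⟨hit, lt_of_le_of_ne hti hne, fun l hil hln h => ?_⟩
  obtain rfl : l = k := hw.2 ⟨by omega, hln⟩ hk (by simpa using h)
  have := hw.apply_le_apply (i := i + 1) (by omega) (by omega) hln
  omega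

lemma exists_gt_of_mem_gamSet (hs : IsAffPerm n s) (hw : IsCubeWindow n s 1) {i t : ℤ}
    (hin : i < n) (ht : t ∈ gamSet n s i) : ∃ b : ℤ, n < b ∧ s b = t := by
  obtain ⟨k, hk, m, rfl⟩ := hs.exists_eq_apply_add_mul t
  obtain ⟨hit, -, ht⟩ := mem_gamSet.1 ht
  have hki : k ≤ i := by
    by_contra! hki
    exact ht k hki hk.2 (by simp)
  have := hw.apply_le_apply hk.1 hki hin.le
  have hm : 0 < m := by
    by_contra! hm
    nlinarith
  exact ⟨k + m * n, by nlinarith [hk.1], hs.apply_add_mul k m⟩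

lemma invNum_eq_sum (hs : IsAffPerm n s) (hw : IsCubeWindow n s 1) :
    invNum n s = ∑ k : Fin (n - 1), (n - ((k : ℕ) + 1)) * gamVec n s k := by
  classical
  set T : Finset (ℤ × ℤ) := univ.biUnion fun k : Fin (n - 1) =>
    Ioc (((k : ℕ) : ℤ) + 1) n ×ˢ gamSet n s ((k : ℕ) + 1)
  have himage :
      Prod.map id s '' {p : ℤ × ℤ | 1 ≤ p.1 ∧ p.1 ≤ n ∧ p.1 < p.2 ∧ s p.2 < s p.1} = T := by
    ext ⟨a, t⟩
    simp only [T, Set.mem_image, Prod.exists, Prod.map, id, Prod.mk.injEq, mem_coe, mem_biUnion,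
      mem_univ, true_and, mem_product, mem_Ioc, Set.mem_ofPred_eq]
    constructor
    · rintro ⟨a, b, ⟨ha, han, hab, hba⟩, rfl, rfl⟩
      obtain ⟨i, hi, hia, hmem⟩ := hs.exists_mem_gamSet_of_lt hw ⟨ha, han⟩ hab hba
      obtain ⟨k, rfl⟩ := Fin.exists_natCast_add_one_eq (m := n - 1) (i := i) hi (by omega)
      exact ⟨k, ⟨hia, han⟩, hmem⟩
    · rintro ⟨k, ⟨hka, han⟩, ht⟩
      obtain ⟨b, hb, rfl⟩ := hs.exists_gt_of_mem_gamSet hw (by omega) ht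
      have := hw.apply_le_apply (i := (k : ℕ) + 1 + 1) (by omega) (by omega) han
      exact ⟨a, b, ⟨by omega, han, by omega, by have := (mem_gamSet.1 ht).2.1; omega⟩, rfl, rfl⟩
  rw [invNum, ← Set.ncard_image_of_injective _ (Function.injective_id.prodMap hs.1.1), himage,
    Set.ncard_coe_finset, card_biUnion]
  · refine sum_congr rfl fun k _ => ?_
    rw [card_product, Int.card_Ioc, gamVec, gam_eq_card]
    congr 1
    omega
  · intro k _ l _ hkl
    refine disjoint_product.2 (Or.inr ?_)
    rcases lt_or_gt_of_ne (Fin.val_ne_of_ne hkl) with h | h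
    · exact hw.disjoint_gamSet (by omega) (by omega) (by omega)
    · exact (hw.disjoint_gamSet (by omega) (by omega) (by omega)).symm

end IsAffPerm

end Inversions

/-- The number of dominant elements of the affine symmetric group lying in the unit
hypercube and having inversion number `d` equals the number of tuples
`γ ∈ ℕ^{n-1}` (indexed by `i = k+1` for `k : Fin (n-1)`) with `γ(i) ≤ i-1` and
`Σ (n-i)·γ(i) = d`. -/
theorem hypercube_hilbert_series (n : ℕ) (hn : 2 ≤ n) (d : ℕ) :
    Set.ncard {s : ℤ → ℤ | IsAffPerm n s ∧ IsDominant n s ∧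
      (∀ i : ℤ, 1 ≤ i → i < (n : ℤ) → s (i + 1) < s i + n) ∧ invNum n s = d} =
    Set.ncard {γ : Fin (n - 1) → ℕ | (∀ k, γ k ≤ (k : ℕ)) ∧
      ∑ k : Fin (n - 1), (n - ((k : ℕ) + 1)) * γ k = d} := by
  have : NeZero n := ⟨by omega⟩
  refine Set.BijOn.ncard_eq (f := gamVec n) ⟨?_, ?_, ?_⟩
  · rintro s ⟨hs, hdom, hcube, rfl⟩
    have hw := hs.isCubeWindow hdom hcube
    refine ⟨fun k => ?_, (hs.invNum_eq_sum hw).symm⟩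
    have := hw.gam_lt (i := (k : ℕ) + 1) (by omega) (by omega)
    rw [gamVec]
    omega
  · rintro s ⟨hs, hdom, hcube, -⟩ s' ⟨hs', hdom', hcube', -⟩ h
    have hw := hs.isCubeWindow hdom hcube
    refine hs.eq_of_eqOn_add_const hs' (c := s n - s' n) (hw.eqOn_of_gam_eq
      ((hs'.isCubeWindow hdom' hcube').add_const _) (by ring) fun i hi hin => ?_)
    obtain ⟨k, rfl⟩ := Fin.exists_natCast_add_one_eq (m := n - 1) (i := i) hi (by omega)
    rw [gam_add_const]
    exact congrFun h k
  · rintro γ ⟨hγ, rfl⟩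
    have hinj : Function.Injective fun k : Fin (n - 1) => ((k : ℕ) : ℤ) + 1 :=
      fun k l h => Fin.ext (by simpa using h)
    obtain ⟨f, hf, hfγ⟩ := exists_isCubeWindow_gam_eq (n := n) (Function.extend _ γ 0)
      fun i hi hin => by
      obtain ⟨k, rfl⟩ := Fin.exists_natCast_add_one_eq (m := n - 1) (i := i) hi (by omega)
      have := hγ k
      rw [hinj.extend_apply]
      omega
    obtain ⟨s, hs, hw, hsf⟩ := hf.exists_isAffPerm
    have hsγ : gamVec n s = γ := funext fun k => by
      rw [gamVec, hsf _ (by omega) (by omega), hfγ _ (by omega) (by omega), hinj.extend_apply]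
    refine ⟨s, ⟨hs, fun i hi hin => (hw.1 i hi hin).1, fun i hi hin => (hw.1 i hi hin).2, ?_⟩, hsγ⟩
    rw [hs.invNum_eq_sum hw, hsγ]
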